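/- Let p, q ∈ Δ^{N−1} be probability vectors, σ a permutation of {1,…,N}, and set u_j = max(α_j(p), α_j(q)) and l_j = min(α_j(p), α_j(q)). Define C_i = { ω ∈ [0,1)^{N−1} : ω_j ≥ u_j for all j < i and l_i ≤ ω_i < u_i } for 1 ≤ i ≤ N−1. Then the disagreement set equals the union of the sets C_i: { ω ∈ [0,1)^{N−1} : a(p, ω) ≠ a(q, ω) } = ⋃_{i=1}^{N−1} C_i. -/

import Mathlib

open MeasureTheory Finset

noncomputable section

/-- Tail sum `S_i(p) = ∑_{j=i}^{N} p_{σ(j)}`, with `N = n+1` and indices as `Fin (n+1)`. -/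
def tailSum {n : ℕ} (σ : Equiv.Perm (Fin (n + 1))) (p : Fin (n + 1) → ℝ)
    (i : Fin (n + 1)) : ℝ :=
  ∑ j ∈ Finset.Ici i, p (σ j)

/-- Threshold `α_i(p) = p_{σ(i)} / S_i(p)` if `S_i(p) > 0`, else `p_{σ(i)}`. -/
def threshold {n : ℕ} (σ : Equiv.Perm (Fin (n + 1))) (p : Fin (n + 1) → ℝ)
    (i : Fin (n + 1)) : ℝ :=
  if 0 < tailSum σ p i then p (σ i) / tailSum σ p i else p (σ i)

open Classical in
/-- The action `a(p, ω)`: `σ(i)` for the smallest index `i` (among the first `n = N - 1`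
indices) with `ω_i < α_i(p)`, and `σ(N)` if no such index exists. -/
def act {n : ℕ} (σ : Equiv.Perm (Fin (n + 1))) (p : Fin (n + 1) → ℝ)
    (ω : Fin n → ℝ) : Fin (n + 1) :=
  match Fin.find? (fun i : Fin n => decide (ω i < threshold σ p i.castSucc)) with
  | some i => σ i.castSucc
  | none => σ (Fin.last n)

/-- The uniform (product Lebesgue) probability measure on `[0,1)^n`. -/
def unif (n : ℕ) : Measure (Fin n → ℝ) :=
  Measure.pi fun _ => volume.restrict (Set.Ico (0 : ℝ) 1)

/-!
The action `a(p, ω)` is `σ` applied to the first index `i` with `ω_i < α_i(p)` (or to `N` if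
there is none), so `a(p, ω) ≠ a(q, ω)` exactly when the two first-hit indices differ. This
happens iff at some index `i` neither test has fired before `i` (that is, `ω_j ≥ u_j` for
`j < i`) and exactly one of them fires at `i`, which says `l_i ≤ ω_i < u_i`.
-/

theorem Fin.find?_ne_find?_iff {n : ℕ} {p q : Fin n → Bool} :
    Fin.find? p ≠ Fin.find? q ↔ ∃ i, (∀ j < i, p j = false ∧ q j = false) ∧ p i ≠ q i := by
  constructor
  · intro hne
    -- the witness is the smaller of the two first hits
    cases hp : Fin.find? p <;> cases hq : Fin.find? q <;> grind
  · rintro ⟨i, hbefore, hi⟩ heq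
    cases hpi : p i
    · have : Fin.find? q = some i :=
        Fin.find?_eq_some_iff.2 ⟨by grind, fun j hj => (hbefore j hj).2⟩
      grind
    · have : Fin.find? p = some i :=
        Fin.find?_eq_some_iff.2 ⟨hpi, fun j hj => (hbefore j hj).1⟩
      grind

theorem min_le_and_lt_max_iff {α : Type*} [LinearOrder α] {a b x : α} :
    min a b ≤ x ∧ x < max a b ↔ ¬(x < a ↔ x < b) := by
  rcases le_total a b with h | h <;> simp [h] <;> grind

theorem act_eq_finSuccEquivLast_symm {n : ℕ} (σ : Equiv.Perm (Fin (n + 1)))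
    (p : Fin (n + 1) → ℝ) (ω : Fin n → ℝ) :
    act σ p ω = σ (finSuccEquivLast.symm
      (Fin.find? fun i : Fin n => decide (ω i < threshold σ p i.castSucc))) := by
  unfold act
  split <;> next h => simp [h, finSuccEquivLast_symm_some]

theorem act_ne_act_iff {n : ℕ} (σ : Equiv.Perm (Fin (n + 1))) (p q : Fin (n + 1) → ℝ)
    (ω : Fin n → ℝ) :
    act σ p ω ≠ act σ q ω ↔
      Fin.find? (fun i : Fin n => decide (ω i < threshold σ p i.castSucc)) ≠
        Fin.find? (fun i : Fin n => decide (ω i < threshold σ q i.castSucc)) := by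
  rw [act_eq_finSuccEquivLast_symm, act_eq_finSuccEquivLast_symm]
  exact (σ.injective.comp finSuccEquivLast.symm.injective).ne_iff

theorem disagreement_set_eq_union_general (n : ℕ) (σ : Equiv.Perm (Fin (n + 1)))
    (p q : Fin (n + 1) → ℝ) :
    let u : Fin n → ℝ :=
      fun j => max (threshold σ p j.castSucc) (threshold σ q j.castSucc)
    let l : Fin n → ℝ :=
      fun j => min (threshold σ p j.castSucc) (threshold σ q j.castSucc)
    let box : Set (Fin n → ℝ) := {ω | ∀ j, ω j ∈ Set.Ico (0 : ℝ) 1}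
    let C : Fin n → Set (Fin n → ℝ) :=
      fun i => {ω ∈ box | (∀ j < i, u j ≤ ω j) ∧ l i ≤ ω i ∧ ω i < u i}
    {ω ∈ box | act σ p ω ≠ act σ q ω} = ⋃ i, C i := by
  intro u l box C
  ext ω
  simp only [C, u, l, Set.mem_ofPred_eq, Set.mem_iUnion, act_ne_act_iff,
    Fin.find?_ne_find?_iff, decide_eq_false_iff_not, not_lt, max_le_iff, ne_eq, decide_eq_decide,
    min_le_and_lt_max_iff, exists_and_left]

/-- The disagreement set equals the union of the sets `C_i`:
`{ω ∈ [0,1)^{N-1} : a(p, ω) ≠ a(q, ω)} = ⋃_{i=1}^{N-1} C_i`, where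
`C_i = {ω ∈ [0,1)^{N-1} : ω_j ≥ u_j ∀ j < i, l_i ≤ ω_i < u_i}`,
with `u_j = max(α_j(p), α_j(q))` and `l_j = min(α_j(p), α_j(q))`. -/
theorem disagreement_set_eq_union (n : ℕ) (σ : Equiv.Perm (Fin (n + 1)))
    (p q : Fin (n + 1) → ℝ)
    (hp : ∀ k, 0 ≤ p k) (hpsum : ∑ k, p k = 1)
    (hq : ∀ k, 0 ≤ q k) (hqsum : ∑ k, q k = 1) :
    let u : Fin n → ℝ :=
      fun j => max (threshold σ p j.castSucc) (threshold σ q j.castSucc)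
    let l : Fin n → ℝ :=
      fun j => min (threshold σ p j.castSucc) (threshold σ q j.castSucc)
    let box : Set (Fin n → ℝ) := {ω | ∀ j, ω j ∈ Set.Ico (0 : ℝ) 1}
    let C : Fin n → Set (Fin n → ℝ) :=
      fun i => {ω ∈ box | (∀ j < i, u j ≤ ω j) ∧ l i ≤ ω i ∧ ω i < u i}
    {ω ∈ box | act σ p ω ≠ act σ q ω} = ⋃ i, C i :=
  disagreement_set_eq_union_general n σ p q
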